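/- arXiv:1601.03526 — 2 statements merged into one kernel-verified Lean document; each statement's English description precedes it below -/
import Mathlib

section
/- Let G be a bispanning graph with disjoint spanning trees S and T. For every edge e ∈ S there exists an edge f ∈ T such that S - e + f and T + e - f are again a pair of disjoint spanning trees of G; moreover any f ≠ e in D(S,e) ∩ C(T,e) works. -/
namespace MG

variable {V E : Type*}

/-- Two vertices are joined by an edge of `F`. -/
def Adj (ends : E → Sym2 V) (F : Set E) (u v : V) : Prop :=
  ∃ e ∈ F, ends e = s(u, v)

/-- Reachability using edges of `F`. -/
def Reach (ends : E → Sym2 V) (F : Set E) : V → V → Prop :=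
  Relation.ReflTransGen (Adj ends F)

/-- The edge set `F` connects all vertices of the multigraph. -/
def Conn (ends : E → Sym2 V) (F : Set E) : Prop :=
  ∀ u v : V, Reach ends F u v

/-- `F` is a spanning tree: it connects all vertices using exactly `|V| - 1` edges. -/
def IsSpanningTree (ends : E → Sym2 V) (F : Set E) : Prop :=
  Conn ends F ∧ Nat.card F = Nat.card V - 1

/-- The multigraph is bispanning: its edge set is the disjoint union of two spanning trees. -/
def Bispanning (ends : E → Sym2 V) : Prop :=
  ∃ S T : Set E, S ∪ T = Set.univ ∧ Disjoint S T ∧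
    IsSpanningTree ends S ∧ IsSpanningTree ends T

/-- Degree of a vertex: number of incident edges. -/
noncomputable def deg (ends : E → Sym2 V) (v : V) : ℕ :=
  Nat.card {e : E | v ∈ ends e}

/-- `C` is (the edge set of) a simple cycle: nonempty, connected, and every
incident vertex is incident to exactly two edges of `C`. -/
def IsCycle (ends : E → Sym2 V) (C : Set E) : Prop :=
  C.Nonempty ∧
  (∀ u v : V, (∃ e ∈ C, u ∈ ends e) → (∃ e ∈ C, v ∈ ends e) → Reach ends C u v) ∧
  (∀ v : V, (∃ e ∈ C, v ∈ ends e) → Nat.card {e : E | e ∈ C ∧ v ∈ ends e} = 2)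

/-- Number of connected components when only edges of `F` are used. -/
noncomputable def numComp (ends : E → Sym2 V) (F : Set E) : ℕ :=
  Nat.card (Quot (Reach ends F))

/-- `D` is an edge cut: removing it increases the number of components. -/
def IsEdgeCut (ends : E → Sym2 V) (D : Set E) : Prop :=
  numComp ends Set.univ < numComp ends Dᶜ

/-- A minimal edge cut: no proper subset is an edge cut. -/
def IsMinEdgeCut (ends : E → Sym2 V) (D : Set E) : Prop :=
  IsEdgeCut ends D ∧ ∀ D' : Set E, D' ⊂ D → ¬ IsEdgeCut ends D'

/-- `D` is the fundamental cut of the tree edge `e` of the spanning tree `F`: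
the minimal edge cut contained in `(E \ F) + e`, which contains `e`. -/
def IsFundCut (ends : E → Sym2 V) (F : Set E) (e : E) (D : Set E) : Prop :=
  D ⊆ insert e Fᶜ ∧ e ∈ D ∧ IsMinEdgeCut ends D

/-- `C` is the fundamental cycle of the non-tree edge `e` w.r.t. the spanning tree `F`:
the cycle contained in `F + e`, which contains `e`. -/
def IsFundCycle (ends : E → Sym2 V) (F : Set E) (e : E) (C : Set E) : Prop :=
  C ⊆ insert e F ∧ e ∈ C ∧ IsCycle ends C

end MG

/-!
Write `e = xy` and let `A` be the set of vertices joined to `x` in `S - e`. Since `S` is a tree,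
`S - e` has exactly two components, `A ∋ x` and its complement `∋ y`, and the minimality of the
fundamental cut `D(S,e)` forces it to be the set of edges crossing `A`. Hence any `f ≠ e` in
`D(S,e) ∩ C(T,e)` reconnects `S - e`, while the path `C(T,e) - f ⊆ T + e - f` reconnects the two
ends of `f` in `T - f`; both new edge sets have the right size, so they are spanning trees. Such
an `f` exists because the path `C(T,e) - e` from `x` to `y` has to leave `A`.
-/

namespace MG

variable {V E : Type*} {ends : E → Sym2 V} {F F' : Set E} {g h : E} {u v w x y : V}

theorem exists_ends_eq (ends : E → Sym2 V) (g : E) : ∃ x y, ends g = s(x, y) :=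
  (ends g).ind fun x y => ⟨x, y, rfl⟩

theorem Adj.symm (huv : Adj ends F u v) : Adj ends F v u := by
  obtain ⟨g, hg, hends⟩ := huv
  exact ⟨g, hg, hends.trans Sym2.eq_swap⟩

theorem Reach.symm (huv : Reach ends F u v) : Reach ends F v u :=
  Relation.ReflTransGen.mono (fun _ _ => Adj.symm) _ _ (Relation.reflTransGen_swap.2 huv)

theorem Reach.mono (hF : F ⊆ F') (huv : Reach ends F u v) : Reach ends F' u v :=
  Relation.ReflTransGen.mono (fun _ _ ⟨g, hg, hends⟩ => ⟨g, hF hg, hends⟩) _ _ huv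

theorem Reach.single (hg : g ∈ F) (huv : ends g = s(u, v)) : Reach ends F u v :=
  Relation.ReflTransGen.single ⟨g, hg, huv⟩

theorem reach_of_mem_ends (hg : g ∈ F) (hu : u ∈ ends g) (hv : v ∈ ends g) :
    Reach ends F u v := by
  obtain ⟨x, y, hxy⟩ := exists_ends_eq ends g
  have hstep : Reach ends F x y := Reach.single hg hxy
  rw [hxy, Sym2.mem_iff] at hu hv
  rcases hu with rfl | rfl <;> rcases hv with rfl | rfl
  exacts [.refl, hstep, hstep.symm, .refl]

theorem reach_equivalence : Equivalence (Reach ends F) :=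
  ⟨fun _ => .refl, Reach.symm, Relation.ReflTransGen.trans⟩

theorem reach_iff_mk_eq : Reach ends F u v ↔ Quot.mk (Reach ends F) u = Quot.mk _ v := by
  rw [Quot.eq, reach_equivalence.eqvGen_iff]

theorem eq_of_reach_empty (huv : Reach ends ∅ u v) : u = v := by
  induction huv with
  | refl => rfl
  | tail _ hadj => exact absurd hadj.choose_spec.1 (Set.notMem_empty _)

theorem Reach.eq_or_exists_mem_ends (huv : Reach ends F u v) :
    u = v ∨ ∃ g ∈ F, v ∈ ends g := by
  induction huv with
  | refl => exact Or.inl rfl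
  | tail _ hadj =>
    obtain ⟨g, hg, hends⟩ := hadj
    exact Or.inr ⟨g, hg, hends ▸ Sym2.mem_mk_right _ _⟩

/-- Follow the walk from its last use of the new edge `g`, which starts at `x` or at `y`. -/
theorem Reach.of_insert (hg : ends g = s(x, y)) (huv : Reach ends (insert g F) u v) :
    Reach ends F u v ∨ Reach ends F x v ∨ Reach ends F y v := by
  induction huv with
  | refl => exact Or.inl .refl
  | tail _ hadj ih =>
    obtain ⟨h, hh, hends⟩ := hadj
    rcases hh with rfl | hh
    · rw [hg, Sym2.eq_iff] at hends
      rcases hends with ⟨-, rfl⟩ | ⟨rfl, -⟩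
      exacts [Or.inr (Or.inr .refl), Or.inr (Or.inl .refl)]
    · have hstep : Reach ends F _ _ := Reach.single hh hends
      exact ih.imp (·.trans hstep) (Or.imp (·.trans hstep) (·.trans hstep))

def Crosses (ends : E → Sym2 V) (A : Set V) (g : E) : Prop :=
  ∃ a b, ends g = s(a, b) ∧ a ∈ A ∧ b ∉ A

theorem Reach.exists_crosses {A : Set V} (huv : Reach ends F u v) (hu : u ∈ A) (hv : v ∉ A) :
    ∃ g ∈ F, Crosses ends A g := by
  induction huv with
  | refl => exact absurd hu hv
  | @tail b c _ hadj ih =>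
    by_cases hb : b ∈ A
    · obtain ⟨g, hg, hends⟩ := hadj
      exact ⟨g, hg, b, c, hends, hb, hv⟩
    · exact ih hb

theorem Conn.mono (hF : F ⊆ F') (hconn : Conn ends F) : Conn ends F' :=
  fun u v => (hconn u v).mono hF

theorem conn_of_reach_of_forall (hxy : Reach ends F x y)
    (hside : ∀ w, Reach ends F x w ∨ Reach ends F y w) : Conn ends F := by
  have hx : ∀ w, Reach ends F x w := fun w => (hside w).elim id hxy.trans
  exact fun u v => (hx u).symm.trans (hx v)

theorem reach_or_reach_of_conn_insert (hg : ends g = s(x, y)) (hconn : Conn ends (insert g F))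
    (w : V) : Reach ends F x w ∨ Reach ends F y w :=
  ((hconn x w).of_insert hg).elim Or.inl id

theorem numComp_empty : numComp ends (∅ : Set E) = Nat.card V :=
  (Nat.card_eq_of_bijective _
    ⟨fun _ _ h => eq_of_reach_empty (reach_iff_mk_eq.2 h), Quot.mk_surjective⟩).symm

section NumComp

variable [Finite V]

theorem numComp_le_one_iff_conn : numComp ends F ≤ 1 ↔ Conn ends F := by
  rw [numComp, Finite.card_le_one_iff_subsingleton]
  refine ⟨fun _ u v => reach_iff_mk_eq.2 (Subsingleton.elim _ _), fun hconn => ⟨?_⟩⟩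
  rintro ⟨u⟩ ⟨v⟩
  exact Quot.sound (hconn u v)

/-- Components of `F` other than the one of `y` stay apart in `F + g`. -/
theorem numComp_le_numComp_insert_add_one (F : Set E) (g : E) :
    numComp ends F ≤ numComp ends (insert g F) + 1 := by
  obtain ⟨x, y, hxy⟩ := exists_ends_eq ends g
  let φ : Quot (Reach ends F) → Quot (Reach ends (insert g F)) :=
    Quot.map id fun _ _ => Reach.mono (Set.subset_insert g F)
  have hinj : Set.InjOn φ {Quot.mk _ y}ᶜ := by
    rintro ⟨a⟩ ha ⟨b⟩ hb hab
    simp only [Set.mem_compl_iff, Set.mem_singleton_iff, ← reach_iff_mk_eq] at ha hb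
    replace hab : Reach ends (insert g F) a b := reach_iff_mk_eq.2 hab
    refine reach_iff_mk_eq.1 ?_
    rcases hab.of_insert hxy with hab | hxb | hyb
    · exact hab
    · rcases hab.symm.of_insert hxy with hba | hxa | hya
      exacts [hba.symm, hxa.symm.trans hxb, absurd hya.symm ha]
    · exact absurd hyb.symm hb
  have hcard := Set.ncard_le_ncard_of_injOn φ (fun _ _ => Set.mem_univ _) hinj
  rw [Set.ncard_compl, Set.ncard_singleton, Set.ncard_univ] at hcard
  exact Nat.sub_le_iff_le_add.1 hcard

theorem card_le_numComp_add_ncard (hF : F.Finite) : Nat.card V ≤ numComp ends F + F.ncard := by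
  induction F, hF using Set.Finite.induction_on with
  | empty => simp [numComp_empty]
  | @insert g F hg hF ih =>
    have := numComp_le_numComp_insert_add_one (ends := ends) F g
    rw [Set.ncard_insert_of_notMem hg hF]
    omega

theorem IsEdgeCut.not_conn_compl [Nonempty V] {D : Set E} (hD : IsEdgeCut ends D) :
    ¬ Conn ends Dᶜ := fun hconn => by
  have : Nonempty (Quot (Reach ends Set.univ)) := .map (Quot.mk _) ‹_›
  have hpos : 0 < numComp ends (Set.univ : Set E) := Finite.card_pos
  have := numComp_le_one_iff_conn.2 hconn
  exact absurd hD (by unfold IsEdgeCut; omega)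

theorem conn_compl_of_not_isEdgeCut {D : Set E} (hconn : Conn ends Set.univ)
    (hD : ¬ IsEdgeCut ends D) : Conn ends Dᶜ :=
  numComp_le_one_iff_conn.1 ((not_lt.1 hD).trans (numComp_le_one_iff_conn.2 hconn))

end NumComp

namespace IsSpanningTree

variable (hF : IsSpanningTree ends F) (hg : g ∈ F) (hxy : ends g = s(x, y))
include hF hg hxy

theorem reach_or_reach_diff_singleton (w : V) :
    Reach ends (F \ {g}) x w ∨ Reach ends (F \ {g}) y w :=
  reach_or_reach_of_conn_insert hxy
    (by rw [Set.insert_sdiff_singleton, Set.insert_eq_of_mem hg]; exact hF.1) w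

theorem conn_of_reach (hF' : F \ {g} ⊆ F') (hreach : Reach ends F' x y) : Conn ends F' :=
  conn_of_reach_of_forall hreach fun w =>
    (hF.reach_or_reach_diff_singleton hg hxy w).imp (.mono hF') (.mono hF')

theorem conn_insert_of_crosses (hh : Crosses ends {w | Reach ends (F \ {g}) x w} h) :
    Conn ends (insert h (F \ {g})) := by
  obtain ⟨a, b, hab, hxa, hxb⟩ := hh
  have hyb := (hF.reach_or_reach_diff_singleton hg hxy b).resolve_left hxb
  have hsub := Set.subset_insert h (F \ {g})
  exact hF.conn_of_reach hg hxy hsub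
    (((hxa.mono hsub).trans (Reach.single (Set.mem_insert h _) hab)).trans (hyb.mono hsub).symm)

theorem not_reach_diff_singleton [Finite V] [Finite E] : ¬ Reach ends (F \ {g}) x y := by
  intro hreach
  have hcomp := numComp_le_one_iff_conn.2 (hF.conn_of_reach hg hxy subset_rfl hreach)
  have hcard := card_le_numComp_add_ncard (ends := ends) (F \ {g}).toFinite
  have hF2 := hF.2
  rw [Nat.card_coe_set_eq] at hF2
  rw [Set.ncard_sdiff_singleton_of_mem hg] at hcard
  have hpos : 0 < F.ncard := (Set.ncard_pos F.toFinite).2 ⟨g, hg⟩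
  omega

end IsSpanningTree

theorem IsSpanningTree.not_isDiag [Finite V] [Finite E] (hF : IsSpanningTree ends F)
    (hg : g ∈ F) : ¬ (ends g).IsDiag := by
  obtain ⟨x, y, hxy⟩ := exists_ends_eq ends g
  rw [hxy, Sym2.mk_isDiag_iff]
  rintro rfl
  exact hF.not_reach_diff_singleton hg hxy .refl

theorem IsSpanningTree.insert_diff_singleton [Finite E] (hF : IsSpanningTree ends F)
    (hg : g ∈ F) (hh : h ∉ F) (hconn : Conn ends (insert h (F \ {g}))) :
    IsSpanningTree ends (insert h (F \ {g})) := by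
  refine ⟨hconn, ?_⟩
  have hF2 := hF.2
  have hpos : 0 < F.ncard := (Set.ncard_pos F.toFinite).2 ⟨g, hg⟩
  rw [Nat.card_coe_set_eq] at hF2 ⊢
  rw [Set.ncard_insert_of_notMem (fun h' => hh h'.1), Set.ncard_sdiff_singleton_of_mem hg]
  omega

section FundCut

variable [Finite V] {S D : Set E} {e : E}

theorem IsFundCut.mem_of_crosses (hD : IsFundCut ends S e D) (hS : IsSpanningTree ends S)
    (he : e ∈ S) (hxy : ends e = s(x, y))
    (hg : Crosses ends {w | Reach ends (S \ {e}) x w} g) : g ∈ D := by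
  by_contra hgD
  have hSD : S \ {e} ⊆ Dᶜ := fun g' hg' hg'D => (hD.1 hg'D).elim hg'.2 (· hg'.1)
  have : Nonempty V := ⟨x⟩
  exact hD.2.2.1.not_conn_compl
    ((hS.conn_insert_of_crosses he hxy hg).mono (Set.insert_subset hgD hSD))

theorem IsFundCut.crosses_of_mem [Finite E] (hD : IsFundCut ends S e D)
    (hS : IsSpanningTree ends S) (he : e ∈ S) (hxy : ends e = s(x, y)) (hg : g ∈ D) :
    Crosses ends {w | Reach ends (S \ {e}) x w} g := by
  have hconn : Conn ends (D \ {g})ᶜ :=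
    conn_compl_of_not_isEdgeCut (hS.1.mono (Set.subset_univ S))
      (hD.2.2.2 _ (Set.sdiff_singleton_ssubset.2 hg))
  obtain ⟨g', hg', hcross⟩ := (hconn x y).exists_crosses (A := {w | Reach ends (S \ {e}) x w})
    .refl (hS.not_reach_diff_singleton he hxy)
  obtain rfl : g' = g := by_contra fun hne => hg' ⟨hD.mem_of_crosses hS he hxy hcross, hne⟩
  exact hcross

end FundCut

open Finset in
theorem sum_card_incident_eq [DecidableEq V] {A : Finset V} {K : Finset E}
    (hK : ∀ g ∈ K, ¬ (ends g).IsDiag) (hKA : ∀ g ∈ K, ∀ w ∈ ends g, w ∈ A) :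
    ∑ w ∈ A, #{g ∈ K | w ∈ ends g} = 2 * #K :=
  calc ∑ w ∈ A, #{g ∈ K | w ∈ ends g}
      = ∑ g ∈ K, #{w ∈ A | w ∈ ends g} :=
        Finset.sum_card_bipartiteAbove_eq_sum_card_bipartiteBelow (fun w g => w ∈ ends g)
    _ = ∑ g ∈ K, 2 := Finset.sum_congr rfl fun g hg => by
        rw [← Sym2.card_toFinset_of_not_isDiag _ (hK g hg)]
        congr 1
        ext w
        simpa using hKA g hg w
    _ = 2 * #K := by rw [Finset.sum_const, smul_eq_mul, mul_comm]

open Finset in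
/-- Otherwise the vertices reachable from `u` in `C - f` would have odd total degree in `C - f`:
degree `1` at `u` and `2` elsewhere. -/
theorem IsCycle.reach_diff_singleton [Finite V] [Finite E] {C : Set E} {f : E}
    (hC : IsCycle ends C) (hloop : ∀ g ∈ C, ¬ (ends g).IsDiag) (hf : f ∈ C)
    (huv : ends f = s(u, v)) : Reach ends (C \ {f}) u v := by
  classical
  have := Fintype.ofFinite V
  have := Fintype.ofFinite E
  by_contra hv
  let A : Finset V := {w | Reach ends (C \ {f}) u w}
  let K : Finset E := {g | g ∈ C \ {f} ∧ ∃ w ∈ ends g, w ∈ A}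
  have hKA : ∀ g ∈ K, ∀ w ∈ ends g, w ∈ A := by
    intro g hg w hw
    simp only [K, A, mem_filter, mem_univ, true_and] at hg ⊢
    obtain ⟨hgC, a, ha, hua⟩ := hg
    exact hua.trans (reach_of_mem_ends hgC ha hw)
  have hdeg : ∀ w ∈ A, #{g ∈ K | w ∈ ends g} = if w = u then 1 else 2 := by
    intro w hw
    have hinc : ∃ g ∈ C, w ∈ ends g := by
      rcases (mem_filter.1 hw).2.eq_or_exists_mem_ends with rfl | ⟨g, hg, hwg⟩
      exacts [⟨f, hf, huv ▸ Sym2.mem_mk_left _ _⟩, ⟨g, hg.1, hwg⟩]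
    have hCw : #{g | g ∈ C ∧ w ∈ ends g} = 2 := by
      rw [← Fintype.card_subtype, ← Nat.card_eq_fintype_card]
      exact hC.2.2 w hinc
    have hfw : f ∈ ({g | g ∈ C ∧ w ∈ ends g} : Finset E) ↔ w = u := by
      simp only [mem_filter, mem_univ, true_and, huv, Sym2.mem_iff, hf]
      exact ⟨fun h => h.resolve_right fun hwv => hv (hwv ▸ (mem_filter.1 hw).2), Or.inl⟩
    have hKw : ({g ∈ K | w ∈ ends g} : Finset E) =
        ({g | g ∈ C ∧ w ∈ ends g} : Finset E).erase f := by
      ext g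
      simp only [K, mem_filter, mem_erase, mem_univ, true_and, Set.mem_sdiff,
        Set.mem_singleton_iff]
      exact ⟨fun ⟨⟨⟨hgC, hgf⟩, _⟩, hwg⟩ => ⟨hgf, hgC, hwg⟩,
        fun ⟨hgf, hgC, hwg⟩ => ⟨⟨⟨hgC, hgf⟩, w, hwg, hw⟩, hwg⟩⟩
    rw [hKw, card_erase_eq_ite, hCw]
    simp only [hfw]
  have hu : u ∈ A := mem_filter.2 ⟨mem_univ u, .refl⟩
  have hsum := sum_card_incident_eq (fun g hg => hloop g (mem_filter.1 hg).2.1.1) hKA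
  rw [sum_congr rfl hdeg, sum_eq_add_sum_sdiff_singleton_of_mem hu, if_pos rfl,
    sum_congr rfl fun w hw => if_neg fun hwu => (mem_sdiff.1 hw).2 (mem_singleton.2 hwu),
    sum_const, smul_eq_mul] at hsum
  omega

end MG

theorem symmetric_edge_exchange_general {V E : Type*} [Finite V] [Finite E]
    (ends : E → Sym2 V)
    (S T : Set E) (hU : S ∪ T = Set.univ) (hd : Disjoint S T)
    (hS : MG.IsSpanningTree ends S) (hT : MG.IsSpanningTree ends T)
    (e : E) (he : e ∈ S)
    (D : Set E) (hD : MG.IsFundCut ends S e D)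
    (C : Set E) (hC : MG.IsFundCycle ends T e C) :
    (∃ f ∈ T, MG.IsSpanningTree ends (insert f (S \ {e})) ∧
        MG.IsSpanningTree ends (insert e (T \ {f}))) ∧
    (∀ f ∈ D ∩ C, f ≠ e →
      f ∈ T ∧ MG.IsSpanningTree ends (insert f (S \ {e})) ∧
        MG.IsSpanningTree ends (insert e (T \ {f}))) := by
  obtain ⟨hCT, heC, hcycle⟩ := hC
  obtain ⟨x, y, hxy⟩ := MG.exists_ends_eq ends e
  have hST : ∀ g, g ∈ S ∨ g ∈ T := fun g => (hU.symm ▸ Set.mem_univ g : g ∈ S ∪ T)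
  have hloop : ∀ g ∈ C, ¬ (ends g).IsDiag := fun g _ =>
    (hST g).elim (hS.not_isDiag ·) (hT.not_isDiag ·)
  have hexchange : ∀ f ∈ D ∩ C, f ≠ e →
      f ∈ T ∧ MG.IsSpanningTree ends (insert f (S \ {e})) ∧
        MG.IsSpanningTree ends (insert e (T \ {f})) := by
    rintro f ⟨hfD, hfC⟩ hfe
    have hfS : f ∉ S := (hD.1 hfD).resolve_left hfe
    have hfT : f ∈ T := (hST f).resolve_left hfS
    obtain ⟨a, b, hab⟩ := MG.exists_ends_eq ends f
    have hCT' : C \ {f} ⊆ insert e (T \ {f}) := fun g ⟨hgC, hgf⟩ =>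
      (hCT hgC).imp id fun hgT => ⟨hgT, hgf⟩
    exact ⟨hfT,
      hS.insert_diff_singleton he hfS
        (hS.conn_insert_of_crosses he hxy (hD.crosses_of_mem hS he hxy hfD)),
      hT.insert_diff_singleton hfT (Set.disjoint_left.1 hd he)
        (hT.conn_of_reach hfT hab (Set.subset_insert _ _)
          ((hcycle.reach_diff_singleton hloop hfC hab).mono hCT'))⟩
  have hpath : MG.Reach ends (C \ {e}) x y := hcycle.reach_diff_singleton hloop heC hxy
  obtain ⟨f, ⟨hfC, hfe⟩, hcross⟩ := hpath.exists_crosses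
    (A := {w | MG.Reach ends (S \ {e}) x w}) .refl (hS.not_reach_diff_singleton he hxy)
  obtain ⟨hfT, hS', hT'⟩ := hexchange f ⟨hD.mem_of_crosses hS he hxy hcross, hfC⟩ hfe
  exact ⟨⟨f, hfT, hS', hT'⟩, hexchange⟩

/-- Symmetric edge exchange in bispanning graphs: for disjoint spanning trees `S`, `T`
and `e ∈ S`, there is an edge `f ∈ T` such that `S - e + f` and `T + e - f` are again
disjoint spanning trees; moreover any `f ≠ e` in `D(S,e) ∩ C(T,e)` works. -/
theorem symmetric_edge_exchange {V E : Type*} [Finite V] [Finite E]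
    (ends : E → Sym2 V) (hloop : ∀ e : E, ¬ (ends e).IsDiag)
    (S T : Set E) (hU : S ∪ T = Set.univ) (hd : Disjoint S T)
    (hS : MG.IsSpanningTree ends S) (hT : MG.IsSpanningTree ends T)
    (e : E) (he : e ∈ S)
    (D : Set E) (hD : MG.IsFundCut ends S e D)
    (C : Set E) (hC : MG.IsFundCycle ends T e C) :
    (∃ f ∈ T, MG.IsSpanningTree ends (insert f (S \ {e})) ∧
        MG.IsSpanningTree ends (insert e (T \ {f}))) ∧
    (∀ f ∈ D ∩ C, f ≠ e →
      f ∈ T ∧ MG.IsSpanningTree ends (insert f (S \ {e})) ∧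
        MG.IsSpanningTree ends (insert e (T \ {f}))) :=
  symmetric_edge_exchange_general ends S T hU hd hS hT e he D hD C hC
end

section
/- Double-attach preserves bispanning: if G = (V,E) is bispanning, v ∉ V a new vertex, and x, y ∈ V (not necessarily distinct) vertices of G, then the graph obtained from G by adding v with new edges {x,v} and {y,v} is bispanning. -/
/-!
Each of the two spanning trees absorbs one of the new edges: the new vertex becomes a leaf of
it, so it stays connected, and it gains one edge for the one new vertex.
-/

namespace MG

variable {V V' E E' : Type*}

theorem Adj.symm_s15 {ends : E → Sym2 V} {F : Set E} {u v : V} (h : Adj ends F u v) :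
    Adj ends F v u := by
  obtain ⟨e, he, hends⟩ := h
  exact ⟨e, he, hends.trans Sym2.eq_swap⟩

theorem Reach.symm_s15 {ends : E → Sym2 V} {F : Set E} {u v : V} (h : Reach ends F u v) :
    Reach ends F v u := by
  induction h with
  | refl => exact .refl
  | tail _ hbc ih => exact ih.head hbc.symm_s15

theorem Reach.map {ends : E → Sym2 V} {ends' : E' → Sym2 V'} {f : V → V'} {g : E → E'}
    (hg : ∀ e, ends' (g e) = (ends e).map f) {F : Set E} {F' : Set E'} (hFF' : g '' F ⊆ F')
    {u v : V} (h : Reach ends F u v) : Reach ends' F' (f u) (f v) := by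
  refine Relation.ReflTransGen.lift f (fun a b ⟨e, he, hends⟩ => ?_) _ _ h
  exact ⟨g e, hFF' ⟨e, he, rfl⟩, by rw [hg, hends, Sym2.map_mk]⟩

theorem IsSpanningTree.attachLeaf [Finite V] [Finite E] {ends : E → Sym2 V}
    {ends' : E' → Sym2 (Option V)}
    {g : E → E'} (hg_inj : Function.Injective g) (hg : ∀ e, ends' (g e) = (ends e).map some)
    {a : E'} (ha : a ∉ Set.range g) {z : V} (hends_a : ends' a = s(some z, none))
    {F : Set E} (hF : IsSpanningTree ends F) :
    IsSpanningTree ends' (insert a (g '' F)) := by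
  obtain ⟨hconn, hcard⟩ := hF
  have hreach_some (u v : V) : Reach ends' (insert a (g '' F)) (some u) (some v) :=
    Reach.map hg (Set.subset_insert _ _) (hconn u v)
  have hreach_none (v : V) : Reach ends' (insert a (g '' F)) none (some v) :=
    .head ⟨a, Set.mem_insert _ _, hends_a.trans Sym2.eq_swap⟩ (hreach_some z v)
  refine ⟨?_, ?_⟩
  · rintro (_ | u) (_ | v)
    exacts [.refl, hreach_none v, (hreach_none u).symm_s15, hreach_some u v]
  · have hV : 0 < Nat.card V := Nat.card_pos_iff.mpr ⟨⟨z⟩, inferInstance⟩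
    have ha' : a ∉ g '' F := fun h => ha (Set.image_subset_range _ _ h)
    rw [Nat.card_coe_set_eq, Set.ncard_insert_of_notMem ha', Set.ncard_image_of_injective _ hg_inj,
      ← Nat.card_coe_set_eq, hcard, Finite.card_option]
    omega

end MG

theorem double_attach_bispanning_general {V E : Type*} [Finite V] [Finite E]
    (ends : E → Sym2 V)
    (h : MG.Bispanning ends) (x y : V) :
    MG.Bispanning (V := Option V) (E := E ⊕ Fin 2)
      (Sum.elim (fun e => (ends e).map some)
        (fun i => if i = 0 then s(some x, (none : Option V)) else s(some y, none))) := by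
  obtain ⟨S, T, hunion, hdisj, hS, hT⟩ := h
  refine ⟨insert (.inr 0) (.inl '' S), insert (.inr 1) (.inl '' T), ?_, ?_,
    hS.attachLeaf Sum.inl_injective (fun _ => rfl) (by simp) rfl,
    hT.attachLeaf Sum.inl_injective (fun _ => rfl) (by simp) rfl⟩
  · ext (e | i)
    · simpa using Set.ext_iff.mp hunion e
    · fin_cases i <;> simp
  · simp [Set.disjoint_image_iff Sum.inl_injective, hdisj]

/-- Double-attach preserves bispanning: attaching a new vertex to `x, y ∈ V` by two
new edges yields a bispanning graph. -/
theorem double_attach_bispanning {V E : Type*} [Finite V] [Finite E]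
    (ends : E → Sym2 V) (hloop : ∀ e : E, ¬ (ends e).IsDiag)
    (h : MG.Bispanning ends) (x y : V) :
    MG.Bispanning (V := Option V) (E := E ⊕ Fin 2)
      (Sum.elim (fun e => (ends e).map some)
        (fun i => if i = 0 then s(some x, (none : Option V)) else s(some y, none))) :=
  double_attach_bispanning_general ends h x y
end
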